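/- Let Δx, Δt > 0, θ ∈ ℝ, and define (𝒜_θ a)_j = a_j + θΔt·D₊D₊D₋(a)_j. Then for any a ∈ ℓ²(ℤ): ‖𝒜_θ a‖²_{ℓ²_Δ} = ‖a‖²_{ℓ²_Δ} + θΔtΔx ‖D₊D₋(a)‖²_{ℓ²_Δ} + θ²Δt² ‖D₊D₊D₋(a)‖²_{ℓ²_Δ}. -/
import Mathlib

noncomputable section
/-- Second difference `D₊D₋(a)_j = (a_{j+1} - 2a_j + a_{j-1})/Δx²`. -/
def D2 (Δx : ℝ) (a : ℤ → ℝ) : ℤ → ℝ := fun j => (a (j + 1) - 2 * a j + a (j - 1)) / Δx ^ 2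
/-- Third difference `D₊D₊D₋(a)_j = (a_{j+2} - 3a_{j+1} + 3a_j - a_{j-1})/Δx³`. -/
def D3 (Δx : ℝ) (a : ℤ → ℝ) : ℤ → ℝ :=
  fun j => (a (j + 2) - 3 * a (j + 1) + 3 * a j - a (j - 1)) / Δx ^ 3
def l2normSq (Δx : ℝ) (a : ℤ → ℝ) : ℝ := Δx * ∑' j : ℤ, (a j) ^ 2

lemma shift_summable (a : ℤ → ℝ) (ha : Summable fun j : ℤ => (a j) ^ 2) (k : ℤ) :
    Summable fun j : ℤ => (a (j + k)) ^ 2 := by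
  exact ((Equiv.addRight k).summable_iff (f := fun j : ℤ => (a j) ^ 2)).mpr ha

lemma prod_summable (a : ℤ → ℝ) (ha : Summable fun j : ℤ => (a j) ^ 2) (m n : ℤ) :
    Summable fun j : ℤ => a (j + m) * a (j + n) := by
  have h1 := shift_summable a ha m
  have h2 := shift_summable a ha n
  refine Summable.of_abs (Summable.of_nonneg_of_le (fun j => abs_nonneg _)
    (fun j => ?_) ((h1.add h2).div_const 2))
  rw [abs_mul]
  nlinarith [sq_abs (a (j + m)), sq_abs (a (j + n)),
    sq_nonneg (|a (j + m)| - |a (j + n)|)]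

lemma hasSum_prod (a : ℤ → ℝ) (ha : Summable fun j : ℤ => (a j) ^ 2) (m n k : ℤ)
    (h : n = m + k) :
    HasSum (fun j : ℤ => a (j + m) * a (j + n)) (∑' j : ℤ, a j * a (j + k)) := by
  subst h
  have hsum := prod_summable a ha m (m + k)
  have e : (∑' j : ℤ, a (j + m) * a (j + (m + k))) = ∑' j : ℤ, a j * a (j + k) := by
    rw [← Equiv.tsum_eq (Equiv.addRight m) (fun j => a j * a (j + k))]
    exact tsum_congr fun j => by simp [add_assoc]
  exact e ▸ hsum.hasSum

/-- `‖𝒜_θ a‖² = ‖a‖² + θΔtΔx‖D₊D₋(a)‖² + θ²Δt²‖D₊D₊D₋(a)‖²` in `ℓ²_Δ`. -/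
theorem stmt14 (Δx Δt θ : ℝ) (hΔx : 0 < Δx) (hΔt : 0 < Δt) (a : ℤ → ℝ)
    (ha : Summable fun j : ℤ => (a j) ^ 2) :
    l2normSq Δx (fun j => a j + θ * Δt * D3 Δx a j)
      = l2normSq Δx a + θ * Δt * Δx * l2normSq Δx (D2 Δx a)
        + θ ^ 2 * Δt ^ 2 * l2normSq Δx (D3 Δx a) := by
  set S0 := ∑' j : ℤ, a j * a (j + (0 : ℤ)) with hS0
  set S1 := ∑' j : ℤ, a j * a (j + (1 : ℤ)) with hS1
  set S2 := ∑' j : ℤ, a j * a (j + (2 : ℤ)) with hS2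
  set S3 := ∑' j : ℤ, a j * a (j + (3 : ℤ)) with hS3
  have hmm := hasSum_prod a ha (-1) (-1) 0 (by ring)
  have hm0 := hasSum_prod a ha (-1) 0 1 (by ring)
  have hm1 := hasSum_prod a ha (-1) 1 2 (by ring)
  have hm2 := hasSum_prod a ha (-1) 2 3 (by ring)
  have h00 := hasSum_prod a ha 0 0 0 (by ring)
  have h01 := hasSum_prod a ha 0 1 1 (by ring)
  have h02 := hasSum_prod a ha 0 2 2 (by ring)
  have h11 := hasSum_prod a ha 1 1 0 (by ring)
  have h12 := hasSum_prod a ha 1 2 1 (by ring)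
  have h22 := hasSum_prod a ha 2 2 0 (by ring)
  -- ‖a‖² piece
  have HA : HasSum (fun j : ℤ => (a j) ^ 2) S0 := by
    have E : (fun j : ℤ => (a j) ^ 2)
        = fun j : ℤ => a (j + (0 : ℤ)) * a (j + (0 : ℤ)) := by
      funext j; simp only [add_zero]; ring
    rw [E]; exact h00
  -- cross piece
  have HC : HasSum (fun j : ℤ => a j * D3 Δx a j)
      ((S2 - 3 * S1 + 3 * S0 - S1) / Δx ^ 3) := by
    have E : (fun j : ℤ => a j * D3 Δx a j)
        = fun j : ℤ => (a (j + (0 : ℤ)) * a (j + (2 : ℤ))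
            - 3 * (a (j + (0 : ℤ)) * a (j + (1 : ℤ)))
            + 3 * (a (j + (0 : ℤ)) * a (j + (0 : ℤ)))
            - a (j + (-1 : ℤ)) * a (j + (0 : ℤ))) / Δx ^ 3 := by
      funext j
      simp only [D3, sub_eq_add_neg, add_zero]
      ring
    rw [E]
    exact (((h02.sub (h01.mul_left 3)).add (h00.mul_left 3)).sub hm0).div_const (Δx ^ 3)
  -- D2 squared piece
  have HD2 : HasSum (fun j : ℤ => (D2 Δx a j) ^ 2)
      ((S0 + 4 * S0 + S0 - 4 * S1 + 2 * S2 - 4 * S1) / Δx ^ 4) := by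
    have E : (fun j : ℤ => (D2 Δx a j) ^ 2)
        = fun j : ℤ => (a (j + (-1 : ℤ)) * a (j + (-1 : ℤ))
            + 4 * (a (j + (0 : ℤ)) * a (j + (0 : ℤ)))
            + a (j + (1 : ℤ)) * a (j + (1 : ℤ))
            - 4 * (a (j + (-1 : ℤ)) * a (j + (0 : ℤ)))
            + 2 * (a (j + (-1 : ℤ)) * a (j + (1 : ℤ)))
            - 4 * (a (j + (0 : ℤ)) * a (j + (1 : ℤ)))) / Δx ^ 4 := by
      funext j
      simp only [D2, sub_eq_add_neg, add_zero]
      ring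
    rw [E]
    exact (((((hmm.add (h00.mul_left 4)).add h11).sub (hm0.mul_left 4)).add
      (hm1.mul_left 2)).sub (h01.mul_left 4)).div_const (Δx ^ 4)
  -- D3 squared piece
  have HD3 : HasSum (fun j : ℤ => (D3 Δx a j) ^ 2)
      ((S0 + 9 * S0 + 9 * S0 + S0 - 6 * S1 + 6 * S2 - 2 * S3 - 18 * S1 + 6 * S2
        - 6 * S1) / Δx ^ 6) := by
    have E : (fun j : ℤ => (D3 Δx a j) ^ 2)
        = fun j : ℤ => (a (j + (-1 : ℤ)) * a (j + (-1 : ℤ))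
            + 9 * (a (j + (0 : ℤ)) * a (j + (0 : ℤ)))
            + 9 * (a (j + (1 : ℤ)) * a (j + (1 : ℤ)))
            + a (j + (2 : ℤ)) * a (j + (2 : ℤ))
            - 6 * (a (j + (-1 : ℤ)) * a (j + (0 : ℤ)))
            + 6 * (a (j + (-1 : ℤ)) * a (j + (1 : ℤ)))
            - 2 * (a (j + (-1 : ℤ)) * a (j + (2 : ℤ)))
            - 18 * (a (j + (0 : ℤ)) * a (j + (1 : ℤ)))
            + 6 * (a (j + (0 : ℤ)) * a (j + (2 : ℤ)))
            - 6 * (a (j + (1 : ℤ)) * a (j + (2 : ℤ)))) / Δx ^ 6 := by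
      funext j
      simp only [D3, sub_eq_add_neg, add_zero]
      ring
    rw [E]
    exact (((((((((hmm.add (h00.mul_left 9)).add (h11.mul_left 9)).add h22).sub
      (hm0.mul_left 6)).add (hm1.mul_left 6)).sub (hm2.mul_left 2)).sub
      (h01.mul_left 18)).add (h02.mul_left 6)).sub (h12.mul_left 6)).div_const (Δx ^ 6)
  -- total for the left-hand side
  have HL : HasSum (fun j : ℤ => (a j + θ * Δt * D3 Δx a j) ^ 2)
      (S0 + (2 * (θ * Δt)) * ((S2 - 3 * S1 + 3 * S0 - S1) / Δx ^ 3)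
        + ((θ * Δt) ^ 2) * ((S0 + 9 * S0 + 9 * S0 + S0 - 6 * S1 + 6 * S2 - 2 * S3
            - 18 * S1 + 6 * S2 - 6 * S1) / Δx ^ 6)) := by
    have E : (fun j : ℤ => (a j + θ * Δt * D3 Δx a j) ^ 2)
        = fun j : ℤ => (a j) ^ 2 + (2 * (θ * Δt)) * (a j * D3 Δx a j)
            + ((θ * Δt) ^ 2) * ((D3 Δx a j) ^ 2) := by
      funext j; ring
    rw [E]
    exact (HA.add (HC.mul_left (2 * (θ * Δt)))).add (HD3.mul_left ((θ * Δt) ^ 2))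
  have hxne : Δx ≠ 0 := ne_of_gt hΔx
  simp only [l2normSq, HL.tsum_eq, HA.tsum_eq, HD2.tsum_eq, HD3.tsum_eq]
  field_simp
  ring
end
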